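/- Let Λ be an infinite vertex-transitive graph whose connective constant is at most κ, let α, β ≥ 0 with α+β ≤ 1, and let 0<λ<1 satisfy (λ(1−α−β)+α)·κ < 1. Let σ be a random configuration assigning each edge of Λ independently to M with probability α, to B with probability β, and to U otherwise. Then almost surely, for every vertex v₀ and every δ > 0 there exists N such that Σ_{P} 1_{P∩B_σ=∅} λ^{|P∩U_σ|} < δ, where the sum ranges over all self-avoiding walks P of length N starting from v₀ (viewed as sets of N edges). -/

import Mathlib

open scoped Classical

inductive Mark : Type
  | U | M | B
deriving DecidableEq

noncomputable def wS {V : Type*} (lam : ℝ) (σ : V → Mark) (S : Finset V) : ℝ :=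
  if ∀ v ∈ S, σ v ≠ Mark.B then lam ^ (S.filter fun v => σ v = Mark.U).card else 0

noncomputable def totalW {V : Type*} (lam : ℝ) (E : Set (Finset V)) (σ : V → Mark) : ℝ :=
  ∑' S : E, wS lam σ S.1

instance : MeasurableSpace Mark := ⊤

open MeasureTheory ProbabilityTheory Filter

/-- The number of self-avoiding walks of length `n` in `G` starting from `v`. -/
noncomputable def sawCount {V : Type*} (G : SimpleGraph V) (v : V) (n : ℕ) : ℕ :=
  Nat.card {p : Σ u : V, G.Walk v u // p.2.IsPath ∧ p.2.length = n}

/-- The danger of a list `l` of edges in the configuration `σ`: `λ^{|l ∩ U_σ|}` if no edge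
of `l` is claimed by Breaker, and `0` otherwise. -/
noncomputable def listDanger {V : Type*} (lam : ℝ) (σ : Sym2 V → Mark)
    (l : List (Sym2 V)) : ℝ :=
  if ∀ e ∈ l, σ e ≠ Mark.B
    then lam ^ (l.countP fun e => decide (σ e = Mark.U)) else 0

noncomputable def fm (lam : ℝ) : Mark → ℝ
  | Mark.U => lam
  | Mark.M => 1
  | Mark.B => 0

lemma fm_nonneg {lam : ℝ} (h0 : 0 ≤ lam) : ∀ x, 0 ≤ fm lam x := by
  intro x; cases x <;> simp [fm] <;> linarith

lemma fm_le_one {lam : ℝ} (h1 : lam ≤ 1) : ∀ x, fm lam x ≤ 1 := by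
  intro x; cases x <;> simp [fm] <;> linarith

lemma measurable_fm (lam : ℝ) : Measurable (fm lam) := fun _ _ => trivial

lemma listDanger_eq_prod {V : Type*} (lam : ℝ) (σ : Sym2 V → Mark) (l : List (Sym2 V)) :
    listDanger lam σ l = (l.map fun e => fm lam (σ e)).prod := by
  induction l with
  | nil => simp [listDanger]
  | cons e l ih =>
    rw [List.map_cons, List.prod_cons, ← ih]
    cases h : σ e with
    | B =>
      have : ¬ ∀ x ∈ e :: l, σ x ≠ Mark.B := by
        push_neg; exact ⟨e, List.mem_cons_self, h⟩
      simp [listDanger, this, h, fm]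
    | U =>
      by_cases hC : ∀ x ∈ l, σ x ≠ Mark.B
      · have hC' : ∀ x ∈ e :: l, σ x ≠ Mark.B := by
          intro x hx
          rcases List.mem_cons.mp hx with rfl | hx
          · simp [h]
          · exact hC x hx
        simp [listDanger, hC, hC', h, fm, List.countP_cons, pow_succ, mul_comm]
      · have : ¬ ∀ x ∈ e :: l, σ x ≠ Mark.B := by
          intro hall; exact hC fun x hx => hall x (List.mem_cons_of_mem _ hx)
        simp [listDanger, this, hC, fm]
    | M =>
      by_cases hC : ∀ x ∈ l, σ x ≠ Mark.B
      · have hC' : ∀ x ∈ e :: l, σ x ≠ Mark.B := by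
          intro x hx
          rcases List.mem_cons.mp hx with rfl | hx
          · simp [h]
          · exact hC x hx
        simp [listDanger, hC, hC', h, fm, List.countP_cons]
      · have : ¬ ∀ x ∈ e :: l, σ x ≠ Mark.B := by
          intro hall; exact hC fun x hx => hall x (List.mem_cons_of_mem _ hx)
        simp [listDanger, this, hC, fm]

lemma listDanger_nonneg {V : Type*} {lam : ℝ} (h0 : 0 ≤ lam) (σ : Sym2 V → Mark)
    (l : List (Sym2 V)) : 0 ≤ listDanger lam σ l := by
  unfold listDanger; split
  · exact pow_nonneg h0 _
  · exact le_refl 0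

lemma listDanger_le_one {V : Type*} {lam : ℝ} (h0 : 0 ≤ lam) (h1 : lam ≤ 1)
    (σ : Sym2 V → Mark) (l : List (Sym2 V)) : listDanger lam σ l ≤ 1 := by
  unfold listDanger; split
  · exact pow_le_one₀ h0 h1
  · exact zero_le_one

lemma measurable_listDanger {V : Type*} (lam : ℝ) (l : List (Sym2 V)) :
    Measurable fun σ : Sym2 V → Mark => listDanger lam σ l := by
  simp_rw [listDanger_eq_prod]
  induction l with
  | nil => simpa using (measurable_const : Measurable fun _ : Sym2 V → Mark => (1:ℝ))
  | cons e l ih =>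
    simp only [List.map_cons, List.prod_cons]
    exact (((measurable_fm lam).comp (measurable_pi_apply e)).mul ih)

lemma integrable_of_le_one {Ω : Type*} [MeasurableSpace Ω] {μ : Measure Ω}
    [IsProbabilityMeasure μ] {X : Ω → ℝ} (hm : Measurable X) (h0 : ∀ ω, 0 ≤ X ω)
    (h1 : ∀ ω, X ω ≤ 1) : Integrable X μ :=
  (integrable_const (1 : ℝ)).mono' hm.aestronglyMeasurable (ae_of_all _ fun ω => by
    rw [Real.norm_eq_abs, abs_of_nonneg (h0 ω)]; exact h1 ω)

lemma integral_finset_prod_of_iIndep {Ω ι : Type*} [MeasurableSpace Ω] {μ : Measure Ω}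
    [IsProbabilityMeasure μ] {g : ι → Ω → ℝ}
    (hind : iIndepFun g μ) (hmeas : ∀ i, Measurable (g i))
    (h0 : ∀ i ω, 0 ≤ g i ω) (h1 : ∀ i ω, g i ω ≤ 1) {m : ℝ}
    (hint : ∀ i, ∫ ω, g i ω ∂μ = m) (s : Finset ι) :
    ∫ ω, ∏ i ∈ s, g i ω ∂μ = m ^ s.card := by
  classical
  induction s using Finset.cons_induction with
  | empty => simp
  | cons i s hi ih =>
    have hindep : IndepFun (∏ j ∈ s, g j) (g i) μ :=
      hind.indepFun_finsetProd_of_notMem hmeas hi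
    have hprodmeas : Measurable (∏ j ∈ s, g j) := by
      have : (∏ j ∈ s, g j) = fun ω => ∏ j ∈ s, g j ω := by
        funext ω; rw [Finset.prod_apply]
      rw [this]; exact Finset.measurable_prod s fun j _ => hmeas j
    have hint1 : Integrable (g i) μ := integrable_of_le_one (hmeas i) (h0 i) (h1 i)
    have hint2 : Integrable (∏ j ∈ s, g j) μ := by
      refine integrable_of_le_one hprodmeas (fun ω => ?_) (fun ω => ?_)
      · rw [Finset.prod_apply]; exact Finset.prod_nonneg fun j _ => h0 j ω
      · rw [Finset.prod_apply]
        exact Finset.prod_le_one (fun j _ => h0 j ω) (fun j _ => h1 j ω)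
    have key := hindep.integral_mul_eq_mul_integral hint2.aestronglyMeasurable hint1.aestronglyMeasurable
    have : (fun ω => ∏ j ∈ Finset.cons i s hi, g j ω) = (∏ j ∈ s, g j) * (g i) := by
      funext ω
      simp only [Finset.prod_cons, Pi.mul_apply, Finset.prod_apply]; ring
    rw [show (∫ ω, ∏ j ∈ Finset.cons i s hi, g j ω ∂μ) = ∫ ω, ((∏ j ∈ s, g j) * (g i)) ω ∂μ by
      rw [← this]]
    rw [key]
    have : ∫ ω, (∏ j ∈ s, g j) ω ∂μ = m ^ s.card := by
      simp_rw [Finset.prod_apply]; exact ih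
    rw [this, hint i, Finset.card_cons, pow_succ]

lemma finite_endpoints {V : Type*} (G : SimpleGraph V)
    (hlf : ∀ u : V, (G.neighborSet u).Finite) (v₀ : V) :
    ∀ N : ℕ, {u : V | ∃ p : G.Walk u v₀, p.length = N}.Finite := by
  intro N
  induction N with
  | zero =>
    apply Set.Finite.subset (Set.finite_singleton v₀)
    rintro u ⟨p, hp⟩
    exact SimpleGraph.Walk.eq_of_length_eq_zero hp
  | succ n ih =>
    apply Set.Finite.subset (ih.biUnion (fun w _ => hlf w))
    rintro u ⟨p, hp⟩
    cases p with
    | nil => simp at hp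
    | @cons _ w _ h q =>
      have hq : w ∈ {u : V | ∃ p : G.Walk u v₀, p.length = n} := ⟨q, by simpa using hp⟩
      exact Set.mem_biUnion hq ((G.mem_neighborSet _ _).2 h.symm)

lemma countable_of_connected {V : Type*} (G : SimpleGraph V) (hconn : G.Connected)
    (hlf : ∀ u : V, (G.neighborSet u).Finite) : Countable V := by
  obtain ⟨v₀⟩ := hconn.nonempty
  have hsub : (Set.univ : Set V) ⊆ ⋃ N : ℕ, {u : V | ∃ p : G.Walk u v₀, p.length = N} := by
    intro u _
    obtain ⟨p⟩ := hconn.preconnected u v₀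
    exact Set.mem_iUnion.2 ⟨p.length, p, rfl⟩
  have : (Set.univ : Set V).Countable :=
    Set.Countable.mono hsub
      (Set.countable_iUnion fun N => (finite_endpoints G hlf v₀ N).countable)
  exact Set.countable_univ_iff.mp this

lemma finite_pathType {V : Type*} (G : SimpleGraph V)
    (hlf : ∀ u : V, (G.neighborSet u).Finite) (v₀ : V) (N : ℕ) :
    Finite {p : Σ u : V, G.Walk v₀ u // p.2.IsPath ∧ p.2.length = N} := by
  classical
  letI : G.LocallyFinite := fun v => (hlf v).fintype
  set S := {u : V | ∃ p : G.Walk v₀ u, p.length = N} with hS_def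
  have hS : S.Finite := by
    apply Set.Finite.subset (finite_endpoints G hlf v₀ N)
    rintro u ⟨p, hp⟩
    exact ⟨p.reverse, by simpa using hp⟩
  haveI := hS.to_subtype
  let f : {p : Σ u : V, G.Walk v₀ u // p.2.IsPath ∧ p.2.length = N} →
      Σ u : S, {q : G.Walk v₀ (u : V) // q.length = N} :=
    fun p => ⟨⟨p.1.1, ⟨p.1.2, p.2.2⟩⟩, ⟨p.1.2, p.2.2⟩⟩
  have hfin : Finite (Σ u : S, {q : G.Walk v₀ (u : V) // q.length = N}) := by
    infer_instance
  refine Finite.of_injective f ?_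
  intro p q h
  have hval : ∀ r, (⟨(f r).1.1, (f r).2.1⟩ : Σ u : V, G.Walk v₀ u) = r.1 := fun r => rfl
  apply Subtype.ext
  rw [← hval p, ← hval q, h]

abbrev PathT {V : Type*} (G : SimpleGraph V) (v₀ : V) (N : ℕ) :=
  {p : Σ u : V, G.Walk v₀ u // p.2.IsPath ∧ p.2.length = N}

noncomputable def dSum {V : Type*} (lam : ℝ) (G : SimpleGraph V) (v₀ : V) (N : ℕ)
    (σ : Sym2 V → Mark) : ENNReal :=
  ∑' p : PathT G v₀ N, ENNReal.ofReal (listDanger lam σ p.1.2.edges)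

/-- Let `Λ` be an infinite, locally finite, connected, vertex-transitive graph with
connective constant at most `κ`, and let `0 < λ < 1` satisfy `(λ(1−α−β)+α)·κ < 1`.  If
each edge of `Λ` is independently given to Maker with probability `α`, to Breaker with
probability `β`, and left unclaimed otherwise, then almost surely, for every vertex `v₀`
and every `δ > 0` there is an `N` for which the total danger of the self-avoiding walks of
length `N` from `v₀` is less than `δ`. -/
theorem stmt_12 {V : Type*} [Infinite V] (G : SimpleGraph V) (hconn : G.Connected)
    (hlf : ∀ u : V, (G.neighborSet u).Finite)
    (htrans : ∀ u w : V, ∃ e : G ≃g G, e u = w)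
    (κ : ℝ) (hκpos : 0 < κ)
    (hκ : ∀ v : V, ∀ ε : ℝ, 0 < ε → ∃ N₀ : ℕ, ∀ N ≥ N₀, (sawCount G v N : ℝ) ≤ (κ + ε) ^ N)
    (α β lam : ℝ) (hα : 0 ≤ α) (hβ : 0 ≤ β) (hαβ : α + β ≤ 1)
    (h0 : 0 < lam) (h1 : lam < 1)
    (hcond : (lam * (1 - α - β) + α) * κ < 1)
    (μ : Measure (Sym2 V → Mark)) [IsProbabilityMeasure μ]
    (hind : iIndepFun
      (fun (e : G.edgeSet) (σ : Sym2 V → Mark) => σ e.1) μ)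
    (hM : ∀ e ∈ G.edgeSet, μ {σ | σ e = Mark.M} = ENNReal.ofReal α)
    (hB : ∀ e ∈ G.edgeSet, μ {σ | σ e = Mark.B} = ENNReal.ofReal β) :
    ∀ᵐ σ ∂μ, ∀ v₀ : V, ∀ δ : ℝ, 0 < δ → ∃ N : ℕ,
      (∑' p : {p : Σ u : V, G.Walk v₀ u // p.2.IsPath ∧ p.2.length = N},
        listDanger lam σ p.1.2.edges) < δ := by
  classical
  haveI hVcount : Countable V := countable_of_connected G hconn hlf
  set m : ℝ := lam * (1 - α - β) + α with hm_def
  have h1αβ : 0 ≤ 1 - α - β := by linarith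
  have hm0 : 0 ≤ m := add_nonneg (mul_nonneg h0.le h1αβ) hα
  -- measurability of coordinate events
  have hmeasA : ∀ (e : Sym2 V) (x : Mark), MeasurableSet {σ : Sym2 V → Mark | σ e = x} :=
    fun e x => show MeasurableSet ((fun σ : Sym2 V → Mark => σ e) ⁻¹' {x}) from
      (measurable_pi_apply e) (MeasurableSpace.measurableSet_top)
  -- probability of U
  have hU : ∀ e ∈ G.edgeSet, μ {σ : Sym2 V → Mark | σ e = Mark.U}
      = ENNReal.ofReal (1 - α - β) := by
    intro e he
    have hcompl : {σ : Sym2 V → Mark | σ e = Mark.U} =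
        ({σ : Sym2 V → Mark | σ e = Mark.M} ∪ {σ : Sym2 V → Mark | σ e = Mark.B})ᶜ := by
      ext σ; cases h : σ e <;> simp [h]
    have hdisj : Disjoint {σ : Sym2 V → Mark | σ e = Mark.M}
        {σ : Sym2 V → Mark | σ e = Mark.B} := by
      rw [Set.disjoint_left]
      intro σ h1' h2'
      simp only [Set.mem_setOf_eq] at h1' h2'
      rw [h1'] at h2'
      exact Mark.noConfusion h2'
    rw [hcompl, measure_compl ((hmeasA e Mark.M).union (hmeasA e Mark.B)) (measure_ne_top μ _),
      measure_union hdisj (hmeasA e Mark.B), hM e he, hB e he, measure_univ,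
      ← ENNReal.ofReal_add hα hβ, ← ENNReal.ofReal_one,
      ← ENNReal.ofReal_sub 1 (add_nonneg hα hβ)]
    congr 1; ring
  -- the independent family
  set g : G.edgeSet → (Sym2 V → Mark) → ℝ := fun j σ => fm lam (σ j.1) with hg_def
  have hgmeas : ∀ j : G.edgeSet, Measurable (g j) :=
    fun j => (measurable_fm lam).comp (measurable_pi_apply j.1)
  have hg0 : ∀ (j : G.edgeSet) σ, 0 ≤ g j σ := fun j σ => fm_nonneg h0.le _
  have hg1 : ∀ (j : G.edgeSet) σ, g j σ ≤ 1 := fun j σ => fm_le_one h1.le _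
  have hgind : iIndepFun g μ :=
    hind.comp (fun _ => fm lam) (fun _ => measurable_fm lam)
  -- expectation of each factor
  have hgint : ∀ j : G.edgeSet, ∫ σ, g j σ ∂μ = m := by
    rintro ⟨e, he⟩
    have hAU := hmeasA e Mark.U
    have hAM := hmeasA e Mark.M
    have hfd : (fun σ : Sym2 V → Mark => fm lam (σ e)) = fun σ =>
        lam * Set.indicator {σ' : Sym2 V → Mark | σ' e = Mark.U} 1 σ
          + Set.indicator {σ' : Sym2 V → Mark | σ' e = Mark.M} 1 σ := by
      funext σ
      cases h : σ e <;>
        simp [fm, Set.indicator_apply, Set.mem_setOf_eq, h]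
    have hiU : Integrable (Set.indicator {σ' : Sym2 V → Mark | σ' e = Mark.U} 1) μ :=
      (integrable_const (1 : ℝ)).indicator hAU
    have hiM : Integrable (Set.indicator {σ' : Sym2 V → Mark | σ' e = Mark.M} 1) μ :=
      (integrable_const (1 : ℝ)).indicator hAM
    show ∫ σ, fm lam (σ e) ∂μ = m
    rw [hfd, integral_add (hiU.const_mul lam) hiM, integral_const_mul lam,
      integral_indicator_one hAU, integral_indicator_one hAM, measureReal_def, measureReal_def, hU e he, hM e he,
      ENNReal.toReal_ofReal h1αβ, ENNReal.toReal_ofReal hα]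
  -- expectation of danger of a list of distinct edges
  have hpath : ∀ l : List (Sym2 V), l.Nodup → (∀ e ∈ l, e ∈ G.edgeSet) →
      ∫ σ, listDanger lam σ l ∂μ = m ^ l.length := by
    intro l hnd hsub
    set l' : List G.edgeSet := l.pmap (fun e he => (⟨e, he⟩ : G.edgeSet)) hsub with hl'
    have hmapval : l'.map (Subtype.val) = l := by
      rw [hl', List.map_pmap]
      exact (List.pmap_eq_map (f := id) _).trans (List.map_id l)
    have hnd' : l'.Nodup := by
      refine List.Nodup.pmap ?_ hnd
      intro a ha b hb hab
      exact congrArg Subtype.val hab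
    have hprodeq : ∀ σ, (∏ j ∈ l'.toFinset, g j σ) = listDanger lam σ l := by
      intro σ
      rw [List.prod_toFinset _ hnd', listDanger_eq_prod, ← hmapval, List.map_map]
      rfl
    have key := integral_finset_prod_of_iIndep hgind hgmeas hg0 hg1 hgint l'.toFinset
    calc ∫ σ, listDanger lam σ l ∂μ = ∫ σ, ∏ j ∈ l'.toFinset, g j σ ∂μ := by
          simp_rw [hprodeq]
      _ = m ^ l'.toFinset.card := key
      _ = m ^ l.length := by
          rw [List.toFinset_card_of_nodup hnd', ← hmapval, List.length_map]
  -- choice of ε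
  have hmκ : m * κ < 1 := by rw [hm_def]; exact hcond
  set ε : ℝ := (1 - m * κ) / (m + 1) with hε_def
  have hε : 0 < ε := div_pos (by linarith) (by linarith)
  set r : ℝ := (κ + ε) * m with hr_def
  have hr0 : 0 ≤ r := mul_nonneg (by linarith) hm0
  have hr1 : r < 1 := by
    have hq : m / (m + 1) < 1 := (div_lt_one (by linarith)).2 (by linarith)
    have hme : m * ε = (1 - m * κ) * (m / (m + 1)) := by rw [hε_def]; ring
    have : m * ε < 1 - m * κ := by
      rw [hme]
      calc (1 - m * κ) * (m / (m + 1)) < (1 - m * κ) * 1 :=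
            mul_lt_mul_of_pos_left hq (by linarith)
        _ = 1 - m * κ := mul_one _
    rw [hr_def]; nlinarith
  -- reduce to a fixed v₀
  rw [ae_all_iff]
  intro v₀
  haveI hTfin : ∀ N : ℕ, Finite (PathT G v₀ N) :=
    fun N => finite_pathType G hlf v₀ N
  have hdmeas : ∀ l : List (Sym2 V),
      Measurable fun σ : Sym2 V → Mark => ENNReal.ofReal (listDanger lam σ l) :=
    fun l => (measurable_listDanger lam l).ennreal_ofReal
  have hYmeas : ∀ N, Measurable (dSum lam G v₀ N) :=
    fun N => Measurable.ennreal_tsum fun p => hdmeas _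
  have hint_d : ∀ (N : ℕ) (p : PathT G v₀ N), Integrable (fun σ => listDanger lam σ p.1.2.edges) μ :=
    fun N p => integrable_of_le_one (measurable_listDanger lam _)
      (fun σ => listDanger_nonneg h0.le σ _) (fun σ => listDanger_le_one h0.le h1.le σ _)
  have hEd : ∀ (N : ℕ) (p : PathT G v₀ N), ∫ σ, listDanger lam σ p.1.2.edges ∂μ = m ^ N := by
    intro N p
    have hlen : p.1.2.edges.length = N := by
      rw [SimpleGraph.Walk.length_edges, p.2.2]
    have := hpath p.1.2.edges p.2.1.1.edges_nodup
      (fun e he => SimpleGraph.Walk.edges_subset_edgeSet p.1.2 he)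
    rwa [hlen] at this
  have hEY : ∀ N, ∫⁻ σ, dSum lam G v₀ N σ ∂μ = (sawCount G v₀ N : ENNReal) * ENNReal.ofReal (m ^ N) := by
    intro N
    haveI := Fintype.ofFinite (PathT G v₀ N)
    simp only [dSum]
    rw [lintegral_tsum fun p => (hdmeas _).aemeasurable]
    have hterm : ∀ p : PathT G v₀ N,
        ∫⁻ σ, ENNReal.ofReal (listDanger lam σ p.1.2.edges) ∂μ = ENNReal.ofReal (m ^ N) := by
      intro p
      rw [← ofReal_integral_eq_lintegral_ofReal (hint_d N p)
        (ae_of_all _ fun σ => listDanger_nonneg h0.le σ _), hEd N p]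
    simp_rw [hterm]
    rw [tsum_fintype, Finset.sum_const, Finset.card_univ, nsmul_eq_mul]
    congr 1
    have : sawCount G v₀ N = Nat.card (PathT G v₀ N) := rfl
    rw [this, Nat.card_eq_fintype_card]
  obtain ⟨N₀, hN₀⟩ := hκ v₀ ε hε
  have htail : ∀ N, N₀ ≤ N → ∫⁻ σ, dSum lam G v₀ N σ ∂μ ≤ ENNReal.ofReal (r ^ N) := by
    intro N hN
    rw [hEY N, ← ENNReal.ofReal_natCast, ← ENNReal.ofReal_mul (Nat.cast_nonneg _)]
    apply ENNReal.ofReal_le_ofReal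
    have : (sawCount G v₀ N : ℝ) * m ^ N ≤ (κ + ε) ^ N * m ^ N :=
      mul_le_mul_of_nonneg_right (hN₀ N hN) (pow_nonneg hm0 N)
    calc (sawCount G v₀ N : ℝ) * m ^ N ≤ (κ + ε) ^ N * m ^ N := this
      _ = r ^ N := by rw [hr_def, mul_pow]
  have hsumfin : (∫⁻ σ, ∑' N, dSum lam G v₀ N σ ∂μ) ≠ ⊤ := by
    rw [lintegral_tsum fun N => (hYmeas N).aemeasurable]
    rw [← Summable.sum_add_tsum_nat_add' (f := fun N => ∫⁻ σ, dSum lam G v₀ N σ ∂μ) (k := N₀) ENNReal.summable]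
    refine ENNReal.add_ne_top.2 ⟨?_, ?_⟩
    · refine (ENNReal.sum_lt_top.mpr ?_).ne
      intro N _
      rw [hEY N]
      exact ENNReal.mul_lt_top (ENNReal.natCast_lt_top _) ENNReal.ofReal_lt_top
    · have hgeom : ∑' n : ℕ, (ENNReal.ofReal r) ^ n = (1 - ENNReal.ofReal r)⁻¹ :=
        ENNReal.tsum_geometric _
      have hr1' : ENNReal.ofReal r < 1 := ENNReal.ofReal_lt_one.2 hr1
      have hne : (1 - ENNReal.ofReal r)⁻¹ ≠ ⊤ := by
        rw [Ne, ENNReal.inv_eq_top, tsub_eq_zero_iff_le]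
        exact fun h => absurd h (not_le.2 hr1')
      refine ne_top_of_le_ne_top hne ?_
      rw [← hgeom]
      refine le_trans (ENNReal.tsum_le_tsum fun n => ?_) (ENNReal.tsum_le_tsum fun n =>
        pow_le_pow_right_of_le_one' hr1'.le (Nat.le_add_right n N₀))
      calc ∫⁻ σ, dSum lam G v₀ (n + N₀) σ ∂μ ≤ ENNReal.ofReal (r ^ (n + N₀)) :=
            htail _ (Nat.le_add_left _ _)
        _ = (ENNReal.ofReal r) ^ (n + N₀) := ENNReal.ofReal_pow hr0 _
  have hfinae : ∀ᵐ σ ∂μ, (∑' N, dSum lam G v₀ N σ) < ⊤ :=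
    ae_lt_top (Measurable.ennreal_tsum hYmeas) hsumfin
  filter_upwards [hfinae] with σ hσ
  intro δ hδ
  by_contra hcon
  push_neg at hcon
  have hYreal : ∀ N, dSum lam G v₀ N σ
      = ENNReal.ofReal (∑' p : PathT G v₀ N, listDanger lam σ p.1.2.edges) := by
    intro N
    haveI := Fintype.ofFinite (PathT G v₀ N)
    simp only [dSum]
    rw [tsum_fintype, tsum_fintype,
      ENNReal.ofReal_sum_of_nonneg fun p _ => listDanger_nonneg h0.le σ _]
  have hge : ∀ N, ENNReal.ofReal δ ≤ dSum lam G v₀ N σ := by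
    intro N
    rw [hYreal N]
    exact ENNReal.ofReal_le_ofReal (hcon N)
  have htop : (∑' N : ℕ, dSum lam G v₀ N σ) = ⊤ := by
    refine top_le_iff.1 ?_
    calc (⊤ : ENNReal) = ∑' _ : ℕ, ENNReal.ofReal δ :=
          (ENNReal.tsum_const_eq_top_of_ne_zero (ENNReal.ofReal_pos.2 hδ).ne').symm
      _ ≤ ∑' N, dSum lam G v₀ N σ := ENNReal.tsum_le_tsum hge
  exact absurd htop hσ.ne
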